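/- Fix a₁, a₂ > 0, ν > 0, and data ỹ ∈ ℝ⁴ with (ỹ₁, ỹ₃) ≠ (0,0), (ỹ₂, ỹ₄) ≠ (0,0), and A ≠ 0. Then Δ > 0, all denominators λᵢ − s^±·qᵢ are nonzero (so ε^+ and ε^− are well defined), and both ε^+ and ε^− are critical points of the weighted triangulation problem with weights λ = (a₁, νa₁, a₂, νa₂), with Lagrange multipliers s^+ and s^− respectively. -/

import Mathlib

open Matrix Real

noncomputable section

/-- q = (a₁, −a₁, a₂, −a₂). -/
def qv (a₁ a₂ : ℝ) : Fin 4 → ℝ := ![a₁, -a₁, a₂, -a₂]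

/-- The weights λ = (a₁, νa₁, a₂, νa₂). -/
def lv (a₁ a₂ ν : ℝ) : Fin 4 → ℝ := ![a₁, ν * a₁, a₂, ν * a₂]

/-- A = a₁ỹ₁² − ν²a₁ỹ₂² + a₂ỹ₃² − ν²a₂ỹ₄². -/
def Aq (a₁ a₂ ν : ℝ) (y : Fin 4 → ℝ) : ℝ :=
  a₁ * y 0 ^ 2 - ν ^ 2 * a₁ * y 1 ^ 2 + a₂ * y 2 ^ 2 - ν ^ 2 * a₂ * y 3 ^ 2

/-- B = 2ν(a₁ỹ₁² + νa₁ỹ₂² + a₂ỹ₃² + νa₂ỹ₄²). -/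
def Bq (a₁ a₂ ν : ℝ) (y : Fin 4 → ℝ) : ℝ :=
  2 * ν * (a₁ * y 0 ^ 2 + ν * a₁ * y 1 ^ 2 + a₂ * y 2 ^ 2 + ν * a₂ * y 3 ^ 2)

/-- C = ν²(a₁ỹ₁² − a₁ỹ₂² + a₂ỹ₃² − a₂ỹ₄²). -/
def Cq (a₁ a₂ ν : ℝ) (y : Fin 4 → ℝ) : ℝ :=
  ν ^ 2 * (a₁ * y 0 ^ 2 - a₁ * y 1 ^ 2 + a₂ * y 2 ^ 2 - a₂ * y 3 ^ 2)

/-- Δ = B² − 4AC. -/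
def Dq (a₁ a₂ ν : ℝ) (y : Fin 4 → ℝ) : ℝ :=
  Bq a₁ a₂ ν y ^ 2 - 4 * Aq a₁ a₂ ν y * Cq a₁ a₂ ν y

/-- s⁺ = (−B + √Δ)/(2A). -/
def sP (a₁ a₂ ν : ℝ) (y : Fin 4 → ℝ) : ℝ :=
  (-Bq a₁ a₂ ν y + Real.sqrt (Dq a₁ a₂ ν y)) / (2 * Aq a₁ a₂ ν y)

/-- s⁻ = (−B − √Δ)/(2A). -/
def sM (a₁ a₂ ν : ℝ) (y : Fin 4 → ℝ) : ℝ :=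
  (-Bq a₁ a₂ ν y - Real.sqrt (Dq a₁ a₂ ν y)) / (2 * Aq a₁ a₂ ν y)

/-- ε⁺ᵢ = s⁺qᵢỹᵢ/(λᵢ − s⁺qᵢ). -/
def eP (a₁ a₂ ν : ℝ) (y : Fin 4 → ℝ) : Fin 4 → ℝ := fun i =>
  sP a₁ a₂ ν y * qv a₁ a₂ i * y i / (lv a₁ a₂ ν i - sP a₁ a₂ ν y * qv a₁ a₂ i)

/-- ε⁻ᵢ = s⁻qᵢỹᵢ/(λᵢ − s⁻qᵢ). -/
def eM (a₁ a₂ ν : ℝ) (y : Fin 4 → ℝ) : Fin 4 → ℝ := fun i =>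
  sM a₁ a₂ ν y * qv a₁ a₂ i * y i / (lv a₁ a₂ ν i - sM a₁ a₂ ν y * qv a₁ a₂ i)

/-- ε is a critical point of the weighted triangulation problem with weights l:
the constraint ∑ᵢ qᵢ(ỹᵢ + εᵢ)² = 0 holds and there is a Lagrange multiplier s with
lᵢεᵢ = s·qᵢ·(ỹᵢ + εᵢ) for all i. -/
def IsCrit (a₁ a₂ : ℝ) (l : Fin 4 → ℝ) (y ε : Fin 4 → ℝ) : Prop :=
  (∑ i, qv a₁ a₂ i * (y i + ε i) ^ 2 = 0) ∧
    ∃ s : ℝ, ∀ i, l i * ε i = s * qv a₁ a₂ i * (y i + ε i)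

end


section AuxLemmas

lemma aux_crit_sum (a₁ a₂ ν s : ℝ) (y : Fin 4 → ℝ)
    (ha₁ : a₁ ≠ 0) (ha₂ : a₂ ≠ 0)
    (h1 : (1:ℝ) - s ≠ 0) (h2 : ν + s ≠ 0)
    (hroot : Aq a₁ a₂ ν y * s ^ 2 + Bq a₁ a₂ ν y * s + Cq a₁ a₂ ν y = 0) :
    (∑ i, qv a₁ a₂ i * (y i + s * qv a₁ a₂ i * y i / (lv a₁ a₂ ν i - s * qv a₁ a₂ i)) ^ 2 = 0) := by
  have d0 : a₁ - s * a₁ ≠ 0 := fun h => (mul_ne_zero ha₁ h1) (by linear_combination h)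
  have d1 : ν * a₁ - s * -a₁ ≠ 0 := fun h => (mul_ne_zero ha₁ h2) (by linear_combination h)
  have d2 : a₂ - s * a₂ ≠ 0 := fun h => (mul_ne_zero ha₂ h1) (by linear_combination h)
  have d3 : ν * a₂ - s * -a₂ ≠ 0 := fun h => (mul_ne_zero ha₂ h2) (by linear_combination h)
  have t0 : y 0 + s * a₁ * y 0 / (a₁ - s * a₁) = y 0 / (1 - s) := by
    field_simp; ring
  have d1' : s * a₁ + a₁ * ν ≠ 0 := fun h => (mul_ne_zero ha₁ h2) (by linear_combination h)
  have d3' : s * a₂ + a₂ * ν ≠ 0 := fun h => (mul_ne_zero ha₂ h2) (by linear_combination h)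
  have t1 : y 1 + s * -a₁ * y 1 / (ν * a₁ - s * -a₁) = ν * y 1 / (ν + s) := by
    have e1 : s * -a₁ * y 1 / (ν * a₁ - s * -a₁) = -(s * y 1) / (ν + s) := by
      rw [div_eq_div_iff d1 h2]; ring
    rw [e1, add_div' _ _ _ h2, div_eq_div_iff h2 h2]; ring
  have t2 : y 2 + s * a₂ * y 2 / (a₂ - s * a₂) = y 2 / (1 - s) := by
    field_simp; ring
  have t3 : y 3 + s * -a₂ * y 3 / (ν * a₂ - s * -a₂) = ν * y 3 / (ν + s) := by
    have e3 : s * -a₂ * y 3 / (ν * a₂ - s * -a₂) = -(s * y 3) / (ν + s) := by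
      rw [div_eq_div_iff d3 h2]; ring
    rw [e3, add_div' _ _ _ h2, div_eq_div_iff h2 h2]; ring
  rw [Fin.sum_univ_four]
  show a₁ * (y 0 + s * a₁ * y 0 / (a₁ - s * a₁)) ^ 2 +
      -a₁ * (y 1 + s * -a₁ * y 1 / (ν * a₁ - s * -a₁)) ^ 2 +
      a₂ * (y 2 + s * a₂ * y 2 / (a₂ - s * a₂)) ^ 2 +
      -a₂ * (y 3 + s * -a₂ * y 3 / (ν * a₂ - s * -a₂)) ^ 2 = 0
  rw [t0, t1, t2, t3]
  have key : a₁ * (y 0 / (1 - s)) ^ 2 + -a₁ * (ν * y 1 / (ν + s)) ^ 2 +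
      a₂ * (y 2 / (1 - s)) ^ 2 + -a₂ * (ν * y 3 / (ν + s)) ^ 2 =
      (Aq a₁ a₂ ν y * s ^ 2 + Bq a₁ a₂ ν y * s + Cq a₁ a₂ ν y) /
        ((1 - s) ^ 2 * (ν + s) ^ 2) := by
    rw [eq_div_iff (mul_ne_zero (pow_ne_zero 2 h1) (pow_ne_zero 2 h2))]
    field_simp
    unfold Aq Bq Cq
    ring
  rw [key, hroot, zero_div]

lemma aux_lag (l q z s : ℝ) (h : l - s * q ≠ 0) :
    l * (s * q * z / (l - s * q)) = s * q * (z + s * q * z / (l - s * q)) := by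
  field_simp; ring

lemma aux_dens (a₁ a₂ ν s : ℝ) (ha₁ : a₁ ≠ 0) (ha₂ : a₂ ≠ 0)
    (hs1 : s ≠ 1) (hsν : s ≠ -ν) :
    ∀ i : Fin 4, lv a₁ a₂ ν i - s * qv a₁ a₂ i ≠ 0 := by
  intro i
  have h1 : (1:ℝ) - s ≠ 0 := sub_ne_zero.mpr (fun h => hs1 h.symm)
  have h2 : ν + s ≠ 0 := fun h => hsν (by linarith)
  fin_cases i
  · show a₁ - s * a₁ ≠ 0
    exact fun h => (mul_ne_zero ha₁ h1) (by linear_combination h)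
  · show ν * a₁ - s * -a₁ ≠ 0
    exact fun h => (mul_ne_zero ha₁ h2) (by linear_combination h)
  · show a₂ - s * a₂ ≠ 0
    exact fun h => (mul_ne_zero ha₂ h1) (by linear_combination h)
  · show ν * a₂ - s * -a₂ ≠ 0
    exact fun h => (mul_ne_zero ha₂ h2) (by linear_combination h)

end AuxLemmas

/-- Δ > 0, all denominators λᵢ − s^±qᵢ are nonzero, and ε⁺, ε⁻ are
critical points of the weighted triangulation problem with weights (a₁, νa₁, a₂, νa₂),
with Lagrange multipliers s⁺ and s⁻ respectively. -/
theorem eps_pm_are_critical_points (a₁ a₂ ν : ℝ) (y : Fin 4 → ℝ)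
    (ha₁ : 0 < a₁) (ha₂ : 0 < a₂) (hν : 0 < ν)
    (h13 : ¬(y 0 = 0 ∧ y 2 = 0)) (h24 : ¬(y 1 = 0 ∧ y 3 = 0))
    (hA : Aq a₁ a₂ ν y ≠ 0) :
    0 < Dq a₁ a₂ ν y ∧
    (∀ i, lv a₁ a₂ ν i - sP a₁ a₂ ν y * qv a₁ a₂ i ≠ 0) ∧
    (∀ i, lv a₁ a₂ ν i - sM a₁ a₂ ν y * qv a₁ a₂ i ≠ 0) ∧
    ((∑ i, qv a₁ a₂ i * (y i + eP a₁ a₂ ν y i) ^ 2 = 0) ∧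
      ∀ i, lv a₁ a₂ ν i * eP a₁ a₂ ν y i =
        sP a₁ a₂ ν y * qv a₁ a₂ i * (y i + eP a₁ a₂ ν y i)) ∧
    ((∑ i, qv a₁ a₂ i * (y i + eM a₁ a₂ ν y i) ^ 2 = 0) ∧
      ∀ i, lv a₁ a₂ ν i * eM a₁ a₂ ν y i =
        sM a₁ a₂ ν y * qv a₁ a₂ i * (y i + eM a₁ a₂ ν y i)) := by
    classical
  set P : ℝ := a₁ * y 0 ^ 2 + a₂ * y 2 ^ 2 with hPdef
  set Q : ℝ := a₁ * y 1 ^ 2 + a₂ * y 3 ^ 2 with hQdef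
  have hP : 0 < P := by
    rcases not_and_or.mp h13 with h | h
    · nlinarith [mul_self_pos.mpr h, sq_nonneg (y 2)]
    · nlinarith [mul_self_pos.mpr h, sq_nonneg (y 0)]
  have hQ : 0 < Q := by
    rcases not_and_or.mp h24 with h | h
    · nlinarith [mul_self_pos.mpr h, sq_nonneg (y 3)]
    · nlinarith [mul_self_pos.mpr h, sq_nonneg (y 1)]
  have hDeq : Dq a₁ a₂ ν y = (4 * ν ^ 2 * (1 + ν) ^ 2) * (P * Q) := by
    unfold Dq Aq Bq Cq; rw [hPdef, hQdef]; ring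
  have hD : 0 < Dq a₁ a₂ ν y := by
    rw [hDeq]; exact mul_pos (by positivity) (mul_pos hP hQ)
  have hsq : Real.sqrt (Dq a₁ a₂ ν y) ^ 2 =
      Bq a₁ a₂ ν y ^ 2 - 4 * Aq a₁ a₂ ν y * Cq a₁ a₂ ν y := by
    rw [Real.sq_sqrt hD.le]; rfl
  have h2A : (2 : ℝ) * Aq a₁ a₂ ν y ≠ 0 := mul_ne_zero two_ne_zero hA
  have hrootP : Aq a₁ a₂ ν y * sP a₁ a₂ ν y ^ 2 + Bq a₁ a₂ ν y * sP a₁ a₂ ν y +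
      Cq a₁ a₂ ν y = 0 := by
    unfold sP
    field_simp
    linear_combination hsq
  have hrootM : Aq a₁ a₂ ν y * sM a₁ a₂ ν y ^ 2 + Bq a₁ a₂ ν y * sM a₁ a₂ ν y +
      Cq a₁ a₂ ν y = 0 := by
    unfold sM
    field_simp
    linear_combination hsq
  have habc1 : Aq a₁ a₂ ν y + Bq a₁ a₂ ν y + Cq a₁ a₂ ν y = (1 + ν) ^ 2 * P := by
    unfold Aq Bq Cq; rw [hPdef]; ring
  have habc2 : Aq a₁ a₂ ν y * ν ^ 2 - Bq a₁ a₂ ν y * ν + Cq a₁ a₂ ν y =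
      -(ν ^ 2 * (1 + ν) ^ 2 * Q) := by
    unfold Aq Bq Cq; rw [hQdef]; ring
  have hpos1 : (0:ℝ) < (1 + ν) ^ 2 * P := mul_pos (by positivity) hP
  have hpos2 : (0:ℝ) < ν ^ 2 * (1 + ν) ^ 2 * Q := mul_pos (by positivity) hQ
  have ne1 : ∀ s : ℝ, Aq a₁ a₂ ν y * s ^ 2 + Bq a₁ a₂ ν y * s + Cq a₁ a₂ ν y = 0 →
      s ≠ 1 ∧ s ≠ -ν := by
    intro s hs
    constructor
    · intro h; rw [h] at hs; nlinarith
    · intro h; rw [h] at hs; nlinarith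
  obtain ⟨hP1, hPν⟩ := ne1 _ hrootP
  obtain ⟨hM1, hMν⟩ := ne1 _ hrootM
  have hdP := aux_dens a₁ a₂ ν (sP a₁ a₂ ν y) ha₁.ne' ha₂.ne' hP1 hPν
  have hdM := aux_dens a₁ a₂ ν (sM a₁ a₂ ν y) ha₁.ne' ha₂.ne' hM1 hMν
  have h1P : (1:ℝ) - sP a₁ a₂ ν y ≠ 0 := sub_ne_zero.mpr (fun h => hP1 h.symm)
  have h2P : ν + sP a₁ a₂ ν y ≠ 0 := fun h => hPν (by linarith)
  have h1M : (1:ℝ) - sM a₁ a₂ ν y ≠ 0 := sub_ne_zero.mpr (fun h => hM1 h.symm)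
  have h2M : ν + sM a₁ a₂ ν y ≠ 0 := fun h => hMν (by linarith)
  refine ⟨hD, hdP, hdM, ⟨?_, ?_⟩, ⟨?_, ?_⟩⟩
  · exact aux_crit_sum a₁ a₂ ν (sP a₁ a₂ ν y) y ha₁.ne' ha₂.ne' h1P h2P hrootP
  · intro i
    exact aux_lag (lv a₁ a₂ ν i) (qv a₁ a₂ i) (y i) (sP a₁ a₂ ν y) (hdP i)
  · exact aux_crit_sum a₁ a₂ ν (sM a₁ a₂ ν y) y ha₁.ne' ha₂.ne' h1M h2M hrootM
  · intro i
    exact aux_lag (lv a₁ a₂ ν i) (qv a₁ a₂ i) (y i) (sM a₁ a₂ ν y) (hdM i)
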